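/- arXiv:2303.01290 — 2 statements merged into one kernel-verified Lean document; each statement's English description precedes it below -/
import Mathlib

section
/- Let G be a connected graph and M a module of G. Then for any u,v ∈ M, the neighborhoods of u and v in G² outside M coincide: N_{G²}(u) \ M = N_{G²}(v) \ M. -/
/-- A vertex subset `M` is a module of `G`. -/
def SimpleGraph.IsModule {V : Type*} (G : SimpleGraph V) (M : Set V) : Prop :=
  ∀ u ∈ M, ∀ v ∈ M, G.neighborSet u \ M = G.neighborSet v \ M

/-- The square of `G`: distinct vertices are adjacent iff their distance in `G`
is at most `2`. -/
def SimpleGraph.square {V : Type*} (G : SimpleGraph V) : SimpleGraph V where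
  Adj u v := u ≠ v ∧ G.Reachable u v ∧ G.dist u v ≤ 2
  symm := ⟨by
    rintro u v ⟨h1, h2, h3⟩
    exact ⟨h1.symm, h2.symm, by rwa [SimpleGraph.dist_comm]⟩⟩
  loopless := ⟨by rintro v ⟨h1, -, -⟩; exact h1 rfl⟩

/-!
A vertex `w` outside the module `M` is adjacent either to all of `M` or to none of it. Take
`u, v ∈ M` and a shortest path `u - w` or `u - x - w` in `G`. If `u` is adjacent to `w`, so
is `v`. Otherwise either `x ∈ M`, and then `x`, hence `v`, is adjacent to `w`; or `x ∉ M`, and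
then `v` is adjacent to `x`, giving the path `v - x - w`.
-/

namespace SimpleGraph

variable {V : Type*} {G : SimpleGraph V}

theorem square_adj_iff {u w : V} :
    G.square.Adj u w ↔ u ≠ w ∧ (G.Adj u w ∨ ∃ x, G.Adj u x ∧ G.Adj x w) := by
  refine ⟨fun ⟨hne, hreach, hdist⟩ => ⟨hne, ?_⟩, fun ⟨hne, hpath⟩ => ⟨hne, ?_⟩⟩
  · obtain ⟨p, hp⟩ := hreach.exists_walk_length_eq_dist
    rw [← hp] at hdist
    match p, hdist with
    | .nil, _ => exact absurd rfl hne
    | .cons hux .nil, _ => exact .inl hux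
    | .cons hux (.cons hxw .nil), _ => exact .inr ⟨_, hux, hxw⟩
  · rcases hpath with hadj | ⟨x, hux, hxw⟩
    · exact ⟨hadj.reachable, (dist_le hadj.toWalk).trans (by simp)⟩
    · let p : G.Walk u w := .cons hux hxw.toWalk
      exact ⟨⟨p⟩, dist_le p⟩

namespace IsModule

variable {M : Set V} {u v w : V}

theorem adj_of_adj (hmod : G.IsModule M) (hu : u ∈ M) (hv : v ∈ M) (hw : w ∉ M)
    (h : G.Adj u w) : G.Adj v w :=
  (hmod u hu v hv ▸ ⟨h, hw⟩ : w ∈ G.neighborSet v \ M).1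

theorem square_adj_of_square_adj (hmod : G.IsModule M) (hu : u ∈ M) (hv : v ∈ M)
    (hw : w ∉ M) (h : G.square.Adj u w) : G.square.Adj v w := by
  have hvw : v ≠ w := fun h => hw (h ▸ hv)
  rcases (square_adj_iff.mp h).2 with huw | ⟨x, hux, hxw⟩
  · exact square_adj_iff.mpr ⟨hvw, .inl (hmod.adj_of_adj hu hv hw huw)⟩
  · by_cases hx : x ∈ M
    · exact square_adj_iff.mpr ⟨hvw, .inl (hmod.adj_of_adj hx hv hw hxw)⟩
    · exact square_adj_iff.mpr ⟨hvw, .inr ⟨x, hmod.adj_of_adj hu hv hx hux, hxw⟩⟩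

end IsModule

end SimpleGraph

theorem module_square_neighborhood_general {V : Type*} (G : SimpleGraph V) (M : Set V)
    (hmod : G.IsModule M) :
    ∀ u ∈ M, ∀ v ∈ M,
      G.square.neighborSet u \ M = G.square.neighborSet v \ M := by
  intro u hu v hv
  ext w
  simp only [Set.mem_sdiff, SimpleGraph.mem_neighborSet]
  exact and_congr_left fun hw =>
    ⟨hmod.square_adj_of_square_adj hu hv hw, hmod.square_adj_of_square_adj hv hu hw⟩

/-- If `G` is connected and `M` is a module of `G`, then the neighborhoods outside `M`
in the square `G²` of any two vertices of `M` coincide. -/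
theorem module_square_neighborhood {V : Type*} (G : SimpleGraph V) (M : Set V)
    (hconn : G.Connected) (hmod : G.IsModule M) :
    ∀ u ∈ M, ∀ v ∈ M,
      G.square.neighborSet u \ M = G.square.neighborSet v \ M :=
  module_square_neighborhood_general G M hmod
end

section
/- Let G be a graph of diameter at most k, p = (p_1,…,p_k) with p_max ≤ 2·p_min, and H the complete weighted graph with w(u,v) = p_{dist_G(u,v)}. Then for any ordering v_1,…,v_n of V(G) there exists an L(p)-labeling of G with span Σ_{t=1}^{n−1} w(v_t, v_{t+1}); namely l(v_i) = Σ_{t=1}^{i−1} w(v_t, v_{t+1}) is a valid L(p)-labeling. -/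
/-- `l` is an `L(p)`-labeling of `G`: any two distinct vertices at distance `d`
receive labels differing by at least `p d`. -/
def IsLpLabeling {V : Type*} (G : SimpleGraph V) (p : ℕ → ℕ) (l : V → ℕ) : Prop :=
  ∀ u v : V, u ≠ v → (p (G.dist u v) : ℤ) ≤ |(l u : ℤ) - (l v : ℤ)|

/-- The span of a labeling: its maximum label. -/
def span {V : Type*} [Fintype V] (l : V → ℕ) : ℕ :=
  Finset.univ.sup l

/-- `λ_p(G)`: the minimum span among all `L(p)`-labelings of `G`. -/
noncomputable def lambda {V : Type*} [Fintype V] (G : SimpleGraph V) (p : ℕ → ℕ) : ℕ :=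
  sInf {s | ∃ l : V → ℕ, IsLpLabeling G p l ∧ span l = s}

/-- The sum of the weights `w(v_t, v_{t+1}) = p (dist v_t v_{t+1})` along the first
`i` consecutive pairs of the ordering `σ`. -/
noncomputable def prefW {V : Type*} (G : SimpleGraph V) (p : ℕ → ℕ) {n : ℕ}
    (σ : Fin n → V) (i : ℕ) : ℕ :=
  ∑ t ∈ Finset.range i,
    if h : t + 1 < n then p (G.dist (σ ⟨t, by omega⟩) (σ ⟨t + 1, h⟩)) else 0

noncomputable def prefStep {V : Type*} (G : SimpleGraph V) (p : ℕ → ℕ) {n : ℕ}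
    (σ : Fin n → V) (t : ℕ) : ℕ :=
  if h : t + 1 < n then p (G.dist (σ ⟨t, by omega⟩) (σ ⟨t + 1, h⟩)) else 0

section PrefixSums

variable {V : Type*} (G : SimpleGraph V) (p : ℕ → ℕ) {n : ℕ} (σ : Fin n → V)

theorem prefW_eq_sum_range_prefStep (i : ℕ) :
    prefW G p σ i = ∑ t ∈ Finset.range i, prefStep G p σ t :=
  rfl

theorem prefStep_eq_of_val_eq_succ {i j : Fin n} (h : j.val = i.val + 1) :
    prefStep G p σ i = p (G.dist (σ i) (σ j)) := by
  obtain ⟨i, hi⟩ := i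
  obtain ⟨j, hj⟩ := j
  simp only at h
  subst h
  simp [prefStep, hj]

theorem prefW_mono : Monotone (prefW G p σ) := fun _ _ hij =>
  Finset.sum_le_sum_of_subset (Finset.range_subset_range.2 hij)

theorem prefW_eq_add_sum_Ico {i j : ℕ} (hij : i ≤ j) :
    prefW G p σ j = prefW G p σ i + ∑ t ∈ Finset.Ico i j, prefStep G p σ t :=
  (Finset.sum_range_add_sum_Ico _ hij).symm

/-- With one step between `i` and `j` this is an equality; with two or more, `hw` bounds the
weight by the first two steps. -/
theorem p_dist_le_sum_Ico_prefStep (hσ : Function.Injective σ)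
    (hw : ∀ x y a b c d : V, x ≠ y → a ≠ b → c ≠ d →
      p (G.dist x y) ≤ p (G.dist a b) + p (G.dist c d))
    {i j : Fin n} (hij : i < j) :
    p (G.dist (σ i) (σ j)) ≤ ∑ t ∈ Finset.Ico i.val j.val, prefStep G p σ t := by
  have hij' : i.val < j.val := hij
  rcases (show j.val = i.val + 1 ∨ i.val + 2 ≤ j.val by omega) with hsucc | hfar
  · rw [hsucc, Finset.Ico_add_one_right_eq_Icc, Finset.Icc_self, Finset.sum_singleton,
      prefStep_eq_of_val_eq_succ G p σ hsucc]
  · let a : Fin n := ⟨i.val + 1, by omega⟩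
    let b : Fin n := ⟨i.val + 2, by omega⟩
    have hia : i ≠ a := fun h => by simpa [a] using congrArg Fin.val h
    have hab : a ≠ b := fun h => by simpa [a, b] using congrArg Fin.val h
    calc p (G.dist (σ i) (σ j))
        ≤ p (G.dist (σ i) (σ a)) + p (G.dist (σ a) (σ b)) :=
          hw _ _ _ _ _ _ (hσ.ne hij.ne) (hσ.ne hia) (hσ.ne hab)
      _ = ∑ t ∈ {i.val, i.val + 1}, prefStep G p σ t := by
          rw [Finset.sum_pair (by omega), prefStep_eq_of_val_eq_succ G p σ (i := i) (j := a) rfl,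
            prefStep_eq_of_val_eq_succ G p σ (i := a) (j := b) rfl]
      _ ≤ ∑ t ∈ Finset.Ico i.val j.val, prefStep G p σ t := by
          apply Finset.sum_le_sum_of_subset
          intro t ht
          simp only [Finset.mem_insert, Finset.mem_singleton] at ht
          simp only [Finset.mem_Ico]
          omega

theorem isLpLabeling_prefW (σ : Fin n ≃ V)
    (hw : ∀ x y a b c d : V, x ≠ y → a ≠ b → c ≠ d →
      p (G.dist x y) ≤ p (G.dist a b) + p (G.dist c d)) :
    IsLpLabeling G p (fun x => prefW G p σ (σ.symm x).val) := by
  have hlt : ∀ i j : Fin n, i < j →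
      (p (G.dist (σ i) (σ j)) : ℤ) ≤ (prefW G p σ j.val : ℤ) - prefW G p σ i.val := by
    intro i j hij
    have hstep := p_dist_le_sum_Ico_prefStep G p σ σ.injective hw hij
    rw [prefW_eq_add_sum_Ico G p σ hij.le]
    push_cast
    linarith
  intro u v huv
  rcases lt_or_gt_of_ne (σ.symm.injective.ne huv) with h | h
  · have := hlt _ _ h
    simp only [Equiv.apply_symm_apply] at this
    rw [abs_sub_comm]
    exact this.trans (le_abs_self _)
  · have := hlt _ _ h
    simp only [Equiv.apply_symm_apply, G.dist_comm] at this
    exact this.trans (le_abs_self _)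

theorem span_prefW [Fintype V] (σ : Fin n ≃ V) :
    span (fun x => prefW G p σ (σ.symm x).val) = prefW G p σ (n - 1) := by
  apply le_antisymm
  · exact Finset.sup_le fun x _ => prefW_mono G p σ (by omega)
  · rcases Nat.eq_zero_or_pos n with hn | hn
    · simp [hn, prefW_eq_sum_range_prefStep]
    · simpa [span] using Finset.le_sup (f := fun x => prefW G p σ (σ.symm x).val)
        (Finset.mem_univ (σ ⟨n - 1, by omega⟩))

end PrefixSums

theorem p_dist_le_add_of_le_two_mul {V : Type*} {G : SimpleGraph V} {p : ℕ → ℕ} {k : ℕ}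
    (hconn : G.Connected) (hdiam : ∀ u v : V, G.dist u v ≤ k)
    (hratio : ∀ d ∈ Finset.Icc 1 k, ∀ d' ∈ Finset.Icc 1 k, p d ≤ 2 * p d')
    {x y a b c d : V} (hxy : x ≠ y) (hab : a ≠ b) (hcd : c ≠ d) :
    p (G.dist x y) ≤ p (G.dist a b) + p (G.dist c d) := by
  have hmem : ∀ {u v : V}, u ≠ v → G.dist u v ∈ Finset.Icc 1 k := fun huv =>
    Finset.mem_Icc.2 ⟨hconn.pos_dist_of_ne huv, hdiam _ _⟩
  have h₁ := hratio _ (hmem hxy) _ (hmem hab)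
  have h₂ := hratio _ (hmem hxy) _ (hmem hcd)
  omega

theorem prefix_sum_labeling_general {V : Type*} [Fintype V] (G : SimpleGraph V)
    (p : ℕ → ℕ) (k : ℕ)
    (hconn : G.Connected) (hdiam : ∀ u v : V, G.dist u v ≤ k)
    (hratio : ∀ d ∈ Finset.Icc 1 k, ∀ d' ∈ Finset.Icc 1 k, p d ≤ 2 * p d')
    (σ : Fin (Fintype.card V) ≃ V) :
    IsLpLabeling G p (fun x => prefW G p σ (σ.symm x).val) ∧
      span (fun x => prefW G p σ (σ.symm x).val) =
        prefW G p σ (Fintype.card V - 1) :=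
  ⟨isLpLabeling_prefW G p σ fun _ _ _ _ _ _ =>
      p_dist_le_add_of_le_two_mul hconn hdiam hratio,
    span_prefW G p σ⟩

/-- Let `G` have diameter at most `k` and `p` be positive on `[1, k]` with
`p_max ≤ 2 p_min`. Then for any ordering `σ = (v_1, …, v_n)` of the vertices, the
map `l(v_i) = Σ_{t=1}^{i−1} w(v_t, v_{t+1})` (with `w(u,v) = p (dist u v)`) is a
valid `L(p)`-labeling of `G`, whose span is the total weight
`Σ_{t=1}^{n−1} w(v_t, v_{t+1})` of the ordering. -/
theorem prefix_sum_labeling {V : Type*} [Fintype V] (G : SimpleGraph V)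
    (p : ℕ → ℕ) (k : ℕ)
    (hconn : G.Connected) (hdiam : ∀ u v : V, G.dist u v ≤ k)
    (hpos : ∀ d ∈ Finset.Icc 1 k, 0 < p d)
    (hratio : ∀ d ∈ Finset.Icc 1 k, ∀ d' ∈ Finset.Icc 1 k, p d ≤ 2 * p d')
    (σ : Fin (Fintype.card V) ≃ V) :
    IsLpLabeling G p (fun x => prefW G p σ (σ.symm x).val) ∧
      span (fun x => prefW G p σ (σ.symm x).val) =
        prefW G p σ (Fintype.card V - 1) :=
  prefix_sum_labeling_general G p k hconn hdiam hratio σ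
end
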